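/- Let H be a multigraph on vertex set {s,w,z} whose only multiedges are sw and wz, let λ be a timefunction in which no two parallel edges are active at the same timestep, and suppose f,g ∈ E(H) satisfy λ(f) = λ(g) = α with f ≠ g (so one of f,g has endpoints s,w and the other has endpoints w,z). Let H′ = H − {f,g}. Then maxD(H,λ,s,z) = maxD(H′,λ,s,z) + 1 and minC(H,λ,s,z) = minC(H′,λ,s,z) + 1. -/

import Mathlib

/-- A (finite, loopless) multigraph: a vertex type, an edge type, and an
endpoints function assigning to each edge an unordered pair of distinct vertices. -/
structure Multigraph where
  V : Type
  E : Type
  fintypeV : Fintype V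
  decEqV : DecidableEq V
  fintypeE : Fintype E
  decEqE : DecidableEq E
  ends : E → Sym2 V
  loopless : ∀ e, ¬ (ends e).IsDiag

attribute [instance] Multigraph.fintypeV Multigraph.decEqV Multigraph.fintypeE Multigraph.decEqE

/-- A temporal `s,z`-path in the temporal graph `(G, lam)`: an alternating sequence of
pairwise distinct vertices and edges, starting at `s`, ending at `z`, whose edges appear
at non-decreasing timesteps. -/
structure TPath (G : Multigraph) (lam : G.E → ℕ) (s z : G.V) where
  verts : List G.V
  edges : List G.E
  len_eq : verts.length = edges.length + 1
  head_eq : verts.head? = some s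
  last_eq : verts.getLast? = some z
  nodup : verts.Nodup
  ends_eq : ∀ (i : ℕ) (h : i < edges.length),
      G.ends (edges.get ⟨i, h⟩) = s(verts.get ⟨i, by omega⟩, verts.get ⟨i + 1, by omega⟩)
  mono : List.Chain' (· ≤ ·) (edges.map lam)

/-- The set of timesteps at which a temporal path is active. -/
def TPath.times {G : Multigraph} {lam : G.E → ℕ} {s z : G.V} (P : TPath G lam s z) : Set ℕ :=
  {t | ∃ e ∈ P.edges, lam e = t}

/-- Two temporal `s,z`-paths are snapshot disjoint if they are not both active at any
common timestep. -/
def SnapDisjoint {G : Multigraph} {lam : G.E → ℕ} {s z : G.V} (P Q : TPath G lam s z) : Prop :=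
  P.times ∩ Q.times = ∅

/-- A set `S` of timesteps is a snapshot `s,z`-cut if every temporal `s,z`-path uses an
edge active at some timestep in `S`. -/
def IsSnapCut (G : Multigraph) (lam : G.E → ℕ) (s z : G.V) (S : Set ℕ) : Prop :=
  ∀ P : TPath G lam s z, ∃ e ∈ P.edges, lam e ∈ S

/-- `maxD G lam s z`: the maximum number of pairwise snapshot disjoint temporal `s,z`-paths. -/
noncomputable def maxD (G : Multigraph) (lam : G.E → ℕ) (s z : G.V) : ℕ :=
  sSup {k | ∃ f : Fin k → TPath G lam s z, ∀ i j, i ≠ j → SnapDisjoint (f i) (f j)}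

/-- `minC G lam s z`: the minimum size of a snapshot `s,z`-cut. -/
noncomputable def minC (G : Multigraph) (lam : G.E → ℕ) (s z : G.V) : ℕ :=
  sInf {h | ∃ S : Finset ℕ, S.card = h ∧ IsSnapCut G lam s z ↑S}

/-- A proper timefunction: each edge is active at a positive timestep, and no two parallel
edges are active at the same timestep. -/
def ProperTime (G : Multigraph) (lam : G.E → ℕ) : Prop :=
  (∀ e, 0 < lam e) ∧ ∀ e f, e ≠ f → G.ends e = G.ends f → lam e ≠ lam f

/-- `G` is Mengerian for time: for every proper timefunction and every pair of distinct
vertices, the maximum number of pairwise snapshot disjoint temporal `s,z`-paths equals the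
minimum size of a snapshot `s,z`-cut. -/
def Mengerian (G : Multigraph) : Prop :=
  ∀ lam : G.E → ℕ, ProperTime G lam → ∀ s z : G.V, s ≠ z →
    maxD G lam s z = minC G lam s z

/-- `H` is a subgraph of `G` (up to isomorphism): `H` embeds into `G`. -/
def IsSubgraph (H G : Multigraph) : Prop :=
  ∃ (fv : H.V → G.V) (fe : H.E → G.E),
    Function.Injective fv ∧ Function.Injective fe ∧
    ∀ e, G.ends (fe e) = (H.ends e).map fv

/-- The m-subdivision of the multiedge `xy` of `G`: delete all edges between `x` and `y`,
add a new vertex (`none`), and join it to each of `x` and `y` by as many parallel edges as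
there were between `x` and `y`. -/
def Multigraph.msubdiv (G : Multigraph) (x y : G.V) : Multigraph where
  V := Option G.V
  E := {e : G.E // G.ends e ≠ s(x, y)} ⊕ ({e : G.E // G.ends e = s(x, y)} × Bool)
  fintypeV := inferInstance
  decEqV := inferInstance
  fintypeE := inferInstance
  decEqE := inferInstance
  ends := fun t =>
    match t with
    | .inl e => (G.ends e.1).map some
    | .inr (_, true) => s(some x, (none : Option G.V))
    | .inr (_, false) => s((none : Option G.V), some y)
  loopless := by
    rintro (⟨e, he⟩ | ⟨e, b⟩)
    · simpa [Sym2.isDiag_map (Option.some_injective _)] using G.loopless e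
    · cases b <;> simp [Sym2.mk_isDiag_iff]

/-- Isomorphism of multigraphs. -/
def MIso (G H : Multigraph) : Prop :=
  ∃ (fv : G.V ≃ H.V) (fe : G.E ≃ H.E), ∀ e, H.ends (fe e) = (G.ends e).map fv

/-- `B` is obtained from `A` by m-subdividing one of its multiedges. -/
def SubdivStep (A B : Multigraph) : Prop :=
  ∃ x y : A.V, (∃ e, A.ends e = s(x, y)) ∧ MIso (A.msubdiv x y) B

/-- `H` is an m-topological minor of `G`: some subgraph of `G` can be obtained from `H` by
a sequence of m-subdivisions. -/
def IsMTopMinor (H G : Multigraph) : Prop :=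
  ∃ K, Relation.ReflTransGen SubdivStep H K ∧ IsSubgraph K G

/-- The multigraph obtained from `G` by keeping only the edges satisfying `P`. -/
def Multigraph.restrictE (G : Multigraph) (P : G.E → Prop) [DecidablePred P] : Multigraph where
  V := G.V
  E := {e : G.E // P e}
  fintypeV := G.fintypeV
  decEqV := G.decEqV
  fintypeE := inferInstance
  decEqE := inferInstance
  ends := fun e => G.ends e.1
  loopless := fun e => G.loopless e.1

/-- The underlying simple graph of a multigraph. -/
def Multigraph.simple (G : Multigraph) : SimpleGraph G.V where
  Adj u v := ∃ e, G.ends e = s(u, v)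
  symm := by
    constructor
    rintro u v ⟨e, he⟩
    exact ⟨e, by rw [he, Sym2.eq_swap]⟩
  loopless := by
    constructor
    rintro u ⟨e, he⟩
    exact G.loopless e (by rw [he]; exact Sym2.mk_isDiag_iff.2 rfl)

/-! The edges active at time `α` are exactly `f` and `g`, and they form a temporal path `s, w, z`
living in the single snapshot `α`. In any temporal graph, deleting the edges of a snapshot `α`
that carries an `s,z`-path lowers `maxD` and `minC` by exactly one. Of a snapshot disjoint family
at most one path uses `α`, and the others survive the deletion; conversely the `α`-path can be
added to any family of the smaller graph. Dually every snapshot cut contains `α`, `S \ {α}` cuts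
the smaller graph, and `insert α S'` cuts the larger one whenever `S'` cuts the smaller. -/

namespace Multigraph

variable {G : Multigraph} {P : G.E → Prop} [DecidablePred P]

-- `(G.restrictE P).E` is `{e // P e}` only up to unfolding `restrictE`; stating the coercions
-- with these signatures keeps `simp` and `rw` from meeting ill-typed terms.
def restrictEIncl (e : (G.restrictE P).E) : G.E := e.1

def restrictEMk (e : G.E) (he : P e) : (G.restrictE P).E := ⟨e, he⟩

end Multigraph

namespace TPath

open Multigraph

variable {G : Multigraph} {lam : G.E → ℕ} {s z : G.V}

theorem edges_ne_nil (hsz : s ≠ z) (p : TPath G lam s z) : p.edges ≠ [] := by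
  intro h
  obtain ⟨v, hv⟩ := List.length_eq_one_iff.mp (by simpa [h] using p.len_eq)
  have hs := p.head_eq
  have hz := p.last_eq
  simp only [hv, List.head?_cons, List.getLast?_singleton, Option.some.injEq] at hs hz
  exact hsz (hs.symm.trans hz)

section restrictE

variable {P : G.E → Prop} [DecidablePred P]

def ofRestrictE (p : TPath (G.restrictE P) (fun e => lam e.1) s z) : TPath G lam s z where
  verts := p.verts
  edges := p.edges.map restrictEIncl
  len_eq := by rw [List.length_map]; exact p.len_eq
  head_eq := p.head_eq
  last_eq := p.last_eq
  nodup := p.nodup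
  ends_eq i h := by
    rw [List.get_eq_getElem, List.getElem_map]
    exact p.ends_eq i (by simpa using h)
  mono := by rw [List.map_map]; exact p.mono

@[simp]
theorem times_ofRestrictE (p : TPath (G.restrictE P) (fun e => lam e.1) s z) :
    p.ofRestrictE.times = p.times := by
  ext t
  show (∃ e ∈ p.edges.map restrictEIncl, lam e = t) ↔ ∃ e ∈ p.edges, lam e.1 = t
  simp [restrictEIncl]

def toRestrictE (p : TPath G lam s z) (hP : ∀ e ∈ p.edges, P e) :
    TPath (G.restrictE P) (fun e => lam e.1) s z where
  verts := p.verts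
  edges := p.edges.pmap restrictEMk hP
  len_eq := by rw [List.length_pmap]; exact p.len_eq
  head_eq := p.head_eq
  last_eq := p.last_eq
  nodup := p.nodup
  ends_eq i h := by
    rw [List.get_eq_getElem, List.getElem_pmap]
    exact p.ends_eq i (by simpa using h)
  mono := by rw [List.map_pmap]; simpa [restrictEMk] using p.mono

@[simp]
theorem times_toRestrictE (p : TPath G lam s z) (hP : ∀ e ∈ p.edges, P e) :
    (p.toRestrictE hP).times = p.times := by
  ext t
  show (∃ e ∈ p.edges.pmap restrictEMk hP, lam e.1 = t) ↔ ∃ e ∈ p.edges, lam e = t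
  constructor
  · rintro ⟨_, hmem, rfl⟩
    obtain ⟨e, he, rfl⟩ := List.mem_pmap.1 hmem
    exact ⟨e, he, rfl⟩
  · rintro ⟨e, he, rfl⟩
    exact ⟨restrictEMk e (hP e he), List.mem_pmap.2 ⟨e, he, rfl⟩, rfl⟩

end restrictE

end TPath

open Function

section snapshots

variable {G : Multigraph} {lam : G.E → ℕ} {s z : G.V}

theorem snapDisjoint_iff {p q : TPath G lam s z} : SnapDisjoint p q ↔ Disjoint p.times q.times :=
  Set.disjoint_iff_inter_eq_empty.symm

theorem isSnapCut_iff {S : Set ℕ} :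
    IsSnapCut G lam s z S ↔ ∀ p : TPath G lam s z, ∃ t ∈ p.times, t ∈ S :=
  forall_congr' fun _ =>
    ⟨fun ⟨e, he, hS⟩ => ⟨_, ⟨e, he, rfl⟩, hS⟩, fun ⟨_, ⟨e, he, rfl⟩, hS⟩ => ⟨e, he, hS⟩⟩

theorem card_le_of_pairwise_snapDisjoint (hsz : s ≠ z) {k : ℕ} {F : Fin k → TPath G lam s z}
    (hF : Pairwise (SnapDisjoint on F)) : k ≤ Fintype.card G.E := by
  choose e he using fun i => List.exists_mem_of_ne_nil _ ((F i).edges_ne_nil hsz)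
  have he_inj : Injective e := fun i j hij => by
    by_contra hne
    exact Set.disjoint_left.1 (snapDisjoint_iff.1 (hF hne)) ⟨e i, he i, rfl⟩
      ⟨e j, he j, by rw [hij]⟩
  simpa using Fintype.card_le_of_injective e he_inj

theorem bddAbove_snapDisjoint_families (hsz : s ≠ z) :
    BddAbove {k | ∃ F : Fin k → TPath G lam s z, ∀ i j, i ≠ j → SnapDisjoint (F i) (F j)} :=
  ⟨_, fun _ ⟨_, hF⟩ => card_le_of_pairwise_snapDisjoint hsz fun i j => hF i j⟩

theorem le_maxD (hsz : s ≠ z) {k : ℕ} {F : Fin k → TPath G lam s z}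
    (hF : Pairwise (SnapDisjoint on F)) : k ≤ maxD G lam s z :=
  le_csSup (bddAbove_snapDisjoint_families hsz) ⟨F, fun _ _ => @hF _ _⟩

theorem exists_pairwise_snapDisjoint_maxD (hsz : s ≠ z) :
    ∃ F : Fin (maxD G lam s z) → TPath G lam s z, Pairwise (SnapDisjoint on F) := by
  obtain ⟨F, hF⟩ := Nat.sSup_mem
    (s := {k | ∃ F : Fin k → TPath G lam s z, ∀ i j, i ≠ j → SnapDisjoint (F i) (F j)})
    ⟨0, finZeroElim, fun i => i.elim0⟩ (bddAbove_snapDisjoint_families hsz)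
  exact ⟨F, fun i j => hF i j⟩

theorem minC_le {S : Finset ℕ} (hS : IsSnapCut G lam s z S) : minC G lam s z ≤ S.card :=
  Nat.sInf_le ⟨S, rfl, hS⟩

theorem exists_isSnapCut_card_eq_minC (hsz : s ≠ z) :
    ∃ S : Finset ℕ, S.card = minC G lam s z ∧ IsSnapCut G lam s z S := by
  refine Nat.sInf_mem (s := {h | ∃ S : Finset ℕ, S.card = h ∧ IsSnapCut G lam s z S})
    ⟨_, Finset.univ.image lam, rfl, fun p => ?_⟩
  obtain ⟨e, he⟩ := List.exists_mem_of_ne_nil _ (p.edges_ne_nil hsz)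
  exact ⟨e, he, by simp⟩

theorem exists_pairwise_snapDisjoint_notMem_times {k : ℕ} {F : Fin (k + 1) → TPath G lam s z}
    (hF : Pairwise (SnapDisjoint on F)) (α : ℕ) :
    ∃ F' : Fin k → TPath G lam s z, Pairwise (SnapDisjoint on F') ∧ ∀ i, α ∉ (F' i).times := by
  by_cases h : ∃ i, α ∈ (F i).times
  · obtain ⟨i₀, hi₀⟩ := h
    exact ⟨F ∘ i₀.succAbove, hF.comp_of_injective Fin.succAbove_right_injective,
      fun i hi => Set.disjoint_left.1 (snapDisjoint_iff.1 (hF (Fin.succAbove_ne i₀ i))) hi hi₀⟩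
  · push Not at h
    exact ⟨F ∘ Fin.castSucc, hF.comp_of_injective (Fin.castSucc_injective k), fun i => h _⟩

theorem SnapDisjoint.symm {p q : TPath G lam s z} (h : SnapDisjoint p q) : SnapDisjoint q p :=
  snapDisjoint_iff.2 (snapDisjoint_iff.1 h).symm

theorem pairwise_snapDisjoint_cons {k : ℕ} {p : TPath G lam s z} {F : Fin k → TPath G lam s z}
    (hp : ∀ i, SnapDisjoint p (F i)) (hF : Pairwise (SnapDisjoint on F)) :
    Pairwise (SnapDisjoint on (Fin.cons p F : Fin (k + 1) → TPath G lam s z)) := by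
  intro i j hij
  induction i using Fin.cases <;> induction j using Fin.cases
  · exact absurd rfl hij
  · exact hp _
  · exact (hp _).symm
  · exact hF (ne_of_apply_ne Fin.succ hij)

end snapshots

section removeTimestep

variable {G : Multigraph} {lam : G.E → ℕ} {s z : G.V} {α : ℕ}
  {P : G.E → Prop} [DecidablePred P]

theorem notMem_times_of_restrictE (hP : ∀ e, P e ↔ lam e ≠ α)
    (p : TPath (G.restrictE P) (fun e => lam e.1) s z) : α ∉ p.times := by
  rintro ⟨e, -, he⟩
  exact (hP e.1).1 e.2 he

theorem exists_restrictE_times_eq (hP : ∀ e, P e ↔ lam e ≠ α) (p : TPath G lam s z)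
    (hα : α ∉ p.times) :
    ∃ p' : TPath (G.restrictE P) (fun e => lam e.1) s z, p'.times = p.times :=
  ⟨p.toRestrictE fun e he => (hP e).2 fun h => hα ⟨e, he, h⟩, TPath.times_toRestrictE _ _⟩

theorem snapDisjoint_of_notMem_times {p₀ q : TPath G lam s z} (hp₀ : ∀ e ∈ p₀.edges, lam e = α)
    (hq : α ∉ q.times) : SnapDisjoint p₀ q := by
  refine snapDisjoint_iff.2 (Set.disjoint_left.2 ?_)
  rintro _ ⟨e, he, rfl⟩
  rwa [hp₀ e he]

theorem le_maxD_restrictE_add_one (hsz : s ≠ z) (hP : ∀ e, P e ↔ lam e ≠ α) {k : ℕ}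
    {F : Fin k → TPath G lam s z} (hF : Pairwise (SnapDisjoint on F)) :
    k ≤ maxD (G.restrictE P) (fun e => lam e.1) s z + 1 := by
  cases k with
  | zero => exact Nat.zero_le _
  | succ k =>
    obtain ⟨F', hF', hα⟩ := exists_pairwise_snapDisjoint_notMem_times hF α
    choose F'' hF'' using fun i => exists_restrictE_times_eq hP (F' i) (hα i)
    refine Nat.succ_le_succ (le_maxD (G := G.restrictE P) hsz (F := F'') fun i j hij => ?_)
    refine snapDisjoint_iff.2 ?_
    simpa only [onFun, snapDisjoint_iff, hF''] using hF' hij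

theorem maxD_eq_maxD_restrictE_add_one (hsz : s ≠ z) (hP : ∀ e, P e ↔ lam e ≠ α)
    {p₀ : TPath G lam s z} (hp₀ : ∀ e ∈ p₀.edges, lam e = α) :
    maxD G lam s z = maxD (G.restrictE P) (fun e => lam e.1) s z + 1 := by
  apply le_antisymm
  · obtain ⟨F, hF⟩ := exists_pairwise_snapDisjoint_maxD (G := G) (lam := lam) hsz
    exact le_maxD_restrictE_add_one hsz hP hF
  · obtain ⟨F, hF⟩ :=
      exists_pairwise_snapDisjoint_maxD (G := G.restrictE P) (lam := fun e => lam e.1) hsz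
    refine le_maxD hsz (pairwise_snapDisjoint_cons (p := p₀) (F := fun i => (F i).ofRestrictE)
      (fun i => snapDisjoint_of_notMem_times hp₀ ?_) fun i j hij => ?_)
    · simpa using notMem_times_of_restrictE hP (F i)
    · simp only [onFun, snapDisjoint_iff, TPath.times_ofRestrictE]
      exact snapDisjoint_iff.1 (hF hij)

theorem isSnapCut_insert_of_restrictE (hP : ∀ e, P e ↔ lam e ≠ α) {S : Set ℕ}
    (hS : IsSnapCut (G.restrictE P) (fun e => lam e.1) s z S) :
    IsSnapCut G lam s z (insert α S) := by
  refine isSnapCut_iff.2 fun p => ?_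
  by_cases hα : α ∈ p.times
  · exact ⟨α, hα, Set.mem_insert α S⟩
  · obtain ⟨p', hp'⟩ := exists_restrictE_times_eq hP p hα
    obtain ⟨t, ht, htS⟩ := isSnapCut_iff.1 hS p'
    exact ⟨t, hp' ▸ ht, Set.mem_insert_of_mem α htS⟩

theorem isSnapCut_restrictE_diff (hP : ∀ e, P e ↔ lam e ≠ α) {S : Set ℕ}
    (hS : IsSnapCut G lam s z S) :
    IsSnapCut (G.restrictE P) (fun e => lam e.1) s z (S \ {α}) := by
  refine isSnapCut_iff.2 fun p => ?_
  obtain ⟨t, ht, htS⟩ := isSnapCut_iff.1 hS p.ofRestrictE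
  rw [TPath.times_ofRestrictE] at ht
  exact ⟨t, ht, htS, fun h => notMem_times_of_restrictE hP p (h ▸ ht)⟩

theorem minC_eq_minC_restrictE_add_one (hsz : s ≠ z) (hP : ∀ e, P e ↔ lam e ≠ α)
    {p₀ : TPath G lam s z} (hp₀ : ∀ e ∈ p₀.edges, lam e = α) :
    minC G lam s z = minC (G.restrictE P) (fun e => lam e.1) s z + 1 := by
  apply le_antisymm
  · obtain ⟨S, hScard, hS⟩ :=
      exists_isSnapCut_card_eq_minC (G := G.restrictE P) (lam := fun e => lam e.1) hsz
    calc minC G lam s z ≤ (insert α S).card :=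
          minC_le (by rw [Finset.coe_insert]; exact isSnapCut_insert_of_restrictE hP hS)
      _ ≤ S.card + 1 := Finset.card_insert_le α S
      _ = _ := by rw [hScard]
  · obtain ⟨S, hScard, hS⟩ := exists_isSnapCut_card_eq_minC (G := G) (lam := lam) hsz
    have hαS : α ∈ S := by
      obtain ⟨e, he, heS⟩ := hS p₀
      rwa [hp₀ e he] at heS
    calc minC (G.restrictE P) (fun e => lam e.1) s z + 1 ≤ (S.erase α).card + 1 := by
          gcongr
          exact minC_le (by rw [Finset.coe_erase]; exact isSnapCut_restrictE_diff hP hS)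
      _ = minC G lam s z := by rw [Finset.card_erase_add_one hαS, hScard]

end removeTimestep

namespace TPath

variable {G : Multigraph} {lam : G.E → ℕ} {s w z : G.V}

def pair (hsw : s ≠ w) (hwz : w ≠ z) (hsz : s ≠ z) {e₁ e₂ : G.E} (h₁ : G.ends e₁ = s(s, w))
    (h₂ : G.ends e₂ = s(w, z)) (hle : lam e₁ ≤ lam e₂) : TPath G lam s z where
  verts := [s, w, z]
  edges := [e₁, e₂]
  len_eq := rfl
  head_eq := rfl
  last_eq := rfl
  nodup := by simp [hsw, hwz, hsz]
  ends_eq i h := by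
    simp only [List.length_cons, List.length_nil] at h
    interval_cases i <;> simp [h₁, h₂]
  mono := List.isChain_pair.mpr hle

@[simp]
theorem edges_pair (hsw : s ≠ w) (hwz : w ≠ z) (hsz : s ≠ z) {e₁ e₂ : G.E}
    (h₁ : G.ends e₁ = s(s, w)) (h₂ : G.ends e₂ = s(w, z)) (hle : lam e₁ ≤ lam e₂) :
    (pair hsw hwz hsz h₁ h₂ hle).edges = [e₁, e₂] :=
  rfl

end TPath

namespace ProperTime

variable {G : Multigraph} {lam : G.E → ℕ}

theorem eq_of_ends_eq (hlam : ProperTime G lam) {e f : G.E} (hends : G.ends e = G.ends f)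
    (hlam_eq : lam e = lam f) : e = f :=
  by_contra fun hne => hlam.2 e f hne hends hlam_eq

variable {s w z : G.V} {f g : G.E}

theorem ends_eq_or_of_lam_eq (hlam : ProperTime G lam)
    (hedges : ∀ e : G.E, G.ends e = s(s, w) ∨ G.ends e = s(w, z)) (hfg : f ≠ g)
    (hfg_lam : lam f = lam g) :
    (G.ends f = s(s, w) ∧ G.ends g = s(w, z)) ∨ (G.ends f = s(w, z) ∧ G.ends g = s(s, w)) := by
  have hne : G.ends f ≠ G.ends g := fun h => hfg (hlam.eq_of_ends_eq h hfg_lam)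
  rcases hedges f with hf | hf <;> rcases hedges g with hg | hg
  · exact absurd (hf.trans hg.symm) hne
  · exact .inl ⟨hf, hg⟩
  · exact .inr ⟨hf, hg⟩
  · exact absurd (hf.trans hg.symm) hne

theorem ne_and_ne_iff_lam_ne (hlam : ProperTime G lam)
    (hedges : ∀ e : G.E, G.ends e = s(s, w) ∨ G.ends e = s(w, z)) (hfg : f ≠ g)
    (hfg_lam : lam f = lam g) (e : G.E) : (e ≠ f ∧ e ≠ g) ↔ lam e ≠ lam f := by
  refine ⟨fun ⟨hef, heg⟩ he => ?_, fun he => ⟨?_, ?_⟩⟩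
  · rcases hedges e with h | h <;>
      rcases hlam.ends_eq_or_of_lam_eq hedges hfg hfg_lam with ⟨hf, hg⟩ | ⟨hf, hg⟩
    · exact hef (hlam.eq_of_ends_eq (h.trans hf.symm) he)
    · exact heg (hlam.eq_of_ends_eq (h.trans hg.symm) (he.trans hfg_lam))
    · exact heg (hlam.eq_of_ends_eq (h.trans hg.symm) (he.trans hfg_lam))
    · exact hef (hlam.eq_of_ends_eq (h.trans hf.symm) he)
  · rintro rfl; exact he rfl
  · rintro rfl; exact he hfg_lam.symm

end ProperTime

theorem stmt14_general (G : Multigraph) (s w z : G.V)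
    (hsw : s ≠ w) (hwz : w ≠ z) (hsz : s ≠ z)
    (hedges : ∀ e : G.E, G.ends e = s(s, w) ∨ G.ends e = s(w, z))
    (lam : G.E → ℕ) (hlam : ProperTime G lam)
    (f g : G.E) (hfg : f ≠ g) (α : ℕ) (hf : lam f = α) (hg : lam g = α) :
    maxD G lam s z
        = maxD (G.restrictE (fun e => e ≠ f ∧ e ≠ g)) (fun e => lam e.1) s z + 1 ∧
    minC G lam s z
        = minC (G.restrictE (fun e => e ≠ f ∧ e ≠ g)) (fun e => lam e.1) s z + 1 := by
  have hfg_lam : lam f = lam g := hf.trans hg.symm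
  have hP : ∀ e, (e ≠ f ∧ e ≠ g) ↔ lam e ≠ α :=
    hf ▸ hlam.ne_and_ne_iff_lam_ne hedges hfg hfg_lam
  obtain ⟨p₀, hp₀⟩ : ∃ p₀ : TPath G lam s z, ∀ e ∈ p₀.edges, lam e = α := by
    rcases hlam.ends_eq_or_of_lam_eq hedges hfg hfg_lam with ⟨hf', hg'⟩ | ⟨hf', hg'⟩
    · exact ⟨.pair hsw hwz hsz hf' hg' hfg_lam.le, by simp [hf, hg]⟩
    · exact ⟨.pair hsw hwz hsz hg' hf' hfg_lam.ge, by simp [hf, hg]⟩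
  exact ⟨maxD_eq_maxD_restrictE_add_one hsz hP hp₀, minC_eq_minC_restrictE_add_one hsz hP hp₀⟩

/-- with `H` on vertex set `{s, w, z}` whose only multiedges are `sw` and
`wz`, a proper timefunction, and two distinct edges `f ≠ g` active at the same timestep
`α`, removing `f` and `g` decreases both `maxD` and `minC` by exactly 1. -/
theorem stmt14 (G : Multigraph) (s w z : G.V)
    (hsw : s ≠ w) (hwz : w ≠ z) (hsz : s ≠ z)
    (hverts : ∀ u : G.V, u = s ∨ u = w ∨ u = z)
    (hedges : ∀ e : G.E, G.ends e = s(s, w) ∨ G.ends e = s(w, z))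
    (lam : G.E → ℕ) (hlam : ProperTime G lam)
    (f g : G.E) (hfg : f ≠ g) (α : ℕ) (hf : lam f = α) (hg : lam g = α) :
    maxD G lam s z
        = maxD (G.restrictE (fun e => e ≠ f ∧ e ≠ g)) (fun e => lam e.1) s z + 1 ∧
    minC G lam s z
        = minC (G.restrictE (fun e => e ≠ f ∧ e ≠ g)) (fun e => lam e.1) s z + 1 :=
  stmt14_general G s w z hsw hwz hsz hedges lam hlam f g hfg α hf hg
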